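/- arXiv:1505.02484 — 2 statements merged into one kernel-verified Lean document; each statement's English description precedes it below -/
import Mathlib

section
/- For all vertices u and v of G and with q_last and q_0 as defined, the probability that two independent simple random walks started at u have their last collision at v satisfies q_last(u, v) = Σ_{n≥0} p_n(u, v)^2 · q_0(v). -/
open MeasureTheory
open scoped ENNReal Classical

namespace CollisionsStmt

variable {V : Type*}

/-- One-step transition probabilities of the simple random walk on `G`:
`p(u,v) = 1/deg u` if `v` is adjacent to `u`, and `0` otherwise. -/
noncomputable def step (G : SimpleGraph V) [G.LocallyFinite] (u v : V) : ℝ≥0∞ :=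
  if G.Adj u v then ((G.degree u : ℝ≥0∞))⁻¹ else 0

/-- The `n`-step transition probabilities of the simple random walk on `G`. -/
noncomputable def pn (G : SimpleGraph V) [G.LocallyFinite] : ℕ → V → V → ℝ≥0∞
  | 0, u, v => if u = v then 1 else 0
  | n + 1, u, v => ∑' w, step G u w * pn G n w v

/-- `μ` is the law (on path space, via the Ionescu–Tulcea trajectory construction) of
two independent walks with one-step transition probabilities `p`, started at `a` and `b`
respectively; equivalently, the Markov chain on `V × V` with kernel `p ⊗ p` started at `(a, b)`.
The law is characterized by being a probability measure with the prescribed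
finite-dimensional (cylinder) distributions. -/
def IsPairWalkMeasure [MeasurableSpace V] (p : V → V → ℝ≥0∞) (a b : V)
    (μ : Measure (ℕ → V × V)) : Prop :=
  IsProbabilityMeasure μ ∧
    ∀ (n : ℕ) (x : ℕ → V × V),
      μ {ω | ∀ i ≤ n, ω i = x i} =
        (if x 0 = (a, b) then (1 : ℝ≥0∞) else 0) *
          ∏ i ∈ Finset.range n, (p (x i).1 (x (i + 1)).1 * p (x i).2 (x (i + 1)).2)

/-- The event that the two walks do not collide at any time `n ≥ 1`. -/
def noCollision : Set (ℕ → V × V) := {ω | ∀ n ≥ 1, (ω n).1 ≠ (ω n).2}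

/-- The event that the two walks have their last collision at the vertex `v`: for some
`n ≥ 0`, `X_n = Y_n = v` and `X_m ≠ Y_m` for all `m > n`. -/
def lastCollisionAt (v : V) : Set (ℕ → V × V) :=
  {ω | ∃ n : ℕ, ω n = (v, v) ∧ ∀ m > n, (ω m).1 ≠ (ω m).2}

/-- The event that the two walks collide at only finitely many times. -/
def finCollisions : Set (ℕ → V × V) := {ω | {n : ℕ | (ω n).1 = (ω n).2}.Finite}

/-- The event that the two walks collide at infinitely many times. -/
def infCollisions : Set (ℕ → V × V) := {ω | {n : ℕ | (ω n).1 = (ω n).2}.Infinite}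

/-- The event that the two walks never collide (including at time `0`). -/
def neverCollide : Set (ℕ → V × V) := {ω | ∀ n : ℕ, (ω n).1 ≠ (ω n).2}

/-!
Splitting at the time `n` of the last collision, `lastCollisionAt v` is the disjoint union over `n`
of the events "`(X_n, Y_n) = (v, v)` and `X_m ≠ Y_m` for all `m > n`". By the Markov property at
time `n`, such an event has probability `p_n(u, v)^2` (the two coordinates move independently)
times the probability `q_0(v)` that the chain restarted at `(v, v)` never meets the diagonal again.
Since the law is only given through its cylinder probabilities, the Markov property is proved for
the finitely many constraints up to a time `n + m`, as an identity between sums over finite paths,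
and then passed to the limit `m → ∞` by continuity of measure from above.
-/

open Filter Topology

noncomputable section MarkovChain

variable {A : Type*}

def kernelPow (k : A → A → ℝ≥0∞) : ℕ → A → A → ℝ≥0∞
  | 0, a, b => if a = b then 1 else 0
  | n + 1, a, b => ∑' c, k a c * kernelPow k n c b

def pathMass (k : A → A → ℝ≥0∞) : ℕ → (ℕ → Set A) → A → ℝ≥0∞
  | 0, S, a => (S 0).indicator 1 a
  | N + 1, S, a => (S 0).indicator 1 a * ∑' b, k a b * pathMass k N (fun i => S (i + 1)) b

def initThen (s D : Set A) (i : ℕ) : Set A := if i = 0 then s else D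

def delayed (n : ℕ) (S : ℕ → Set A) (i : ℕ) : Set A := if i < n then Set.univ else S (i - n)

@[simp]
lemma delayed_zero (S : ℕ → Set A) : delayed 0 S = S := by
  funext i; simp [delayed]

lemma forall_mem_delayed_initThen_iff (n : ℕ) (c : A) (D : Set A) (ω : ℕ → A) :
    (∀ i, ω i ∈ delayed n (initThen {c} D) i) ↔ ω n = c ∧ ∀ m > n, ω m ∈ D := by
  simp only [delayed, initThen]
  refine ⟨fun h => ⟨by simpa using h n, fun m hm => ?_⟩, fun ⟨hn, hD⟩ i => ?_⟩
  · simpa [hm.not_gt, Nat.sub_eq_zero_iff_le, hm.not_ge] using h m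
  · split_ifs with hlt hzero
    · trivial
    · rwa [show i = n by omega]
    · exact hD i (by omega)

lemma kernelPow_prod {B : Type*} (p : A → A → ℝ≥0∞) (q : B → B → ℝ≥0∞) (n : ℕ) (a c : A)
    (b d : B) :
    kernelPow (fun x y : A × B => p x.1 y.1 * q x.2 y.2) n (a, b) (c, d) =
      kernelPow p n a c * kernelPow q n b d := by
  induction n generalizing a b with
  | zero => by_cases ha : a = c <;> by_cases hb : b = d <;> simp [kernelPow, ha, hb]
  | succ n ih =>
    simp only [kernelPow]
    rw [ENNReal.tsum_prod', ← ENNReal.tsum_mul_right]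
    refine tsum_congr fun x => ?_
    rw [← ENNReal.tsum_mul_left]
    refine tsum_congr fun y => ?_
    rw [ih]
    ring

lemma pathMass_eq_zero_of_notMem (k : A → A → ℝ≥0∞) (N : ℕ) {S : ℕ → Set A} {a : A}
    (ha : a ∉ S 0) : pathMass k N S a = 0 := by
  cases N <;> simp [pathMass, ha]

lemma pathMass_congr_start (k : A → A → ℝ≥0∞) (N : ℕ) {S T : ℕ → Set A} {a : A}
    (hS : a ∈ S 0) (hT : a ∈ T 0) (h : ∀ i, S (i + 1) = T (i + 1)) :
    pathMass k N S a = pathMass k N T a := by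
  cases N <;> simp [pathMass, hS, hT, h]

lemma pathMass_add_delayed (k : A → A → ℝ≥0∞) (n m : ℕ) (S : ℕ → Set A) (a : A) :
    pathMass k (n + m) (delayed n S) a = ∑' b, kernelPow k n a b * pathMass k m S b := by
  induction n generalizing a with
  | zero =>
    rw [tsum_eq_single a fun b hb => by simp [kernelPow, Ne.symm hb]]
    simp [kernelPow]
  | succ n ih =>
    have hshift : (fun i => delayed (n + 1) S (i + 1)) = delayed n S := by
      funext i; simp [delayed]
    rw [Nat.add_right_comm, pathMass, hshift]
    simp only [delayed, Nat.zero_lt_succ, if_true, Set.indicator_univ, Pi.one_apply, one_mul, ih,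
      kernelPow, ← ENNReal.tsum_mul_left, ← ENNReal.tsum_mul_right]
    rw [ENNReal.tsum_comm]
    exact tsum_congr fun b => tsum_congr fun c => by ring

lemma tsum_path_eq_pathMass (k : A → A → ℝ≥0∞) (N : ℕ) (S : ℕ → Set A) (a : A) :
    ∑' x : Fin (N + 1) → A, (∏ i : Fin (N + 1), (S i).indicator 1 (x i)) *
      ((if x 0 = a then 1 else 0) * ∏ i : Fin N, k (x i.castSucc) (x i.succ)) =
      pathMass k N S a := by
  induction N generalizing S a with
  | zero =>
    rw [← (Equiv.funUnique (Fin 1) A).symm.tsum_eq]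
    simp [pathMass]
  | succ N ih =>
    have hS : ∀ (b : A) (y : Fin (N + 1) → A),
        ∏ i : Fin (N + 2), (S i).indicator (1 : A → ℝ≥0∞) ((Fin.cons b y : Fin (N + 2) → A) i) =
          (S 0).indicator 1 b * ∏ j : Fin (N + 1), (S (j + 1)).indicator 1 (y j) := by
      intro b y
      simp [Fin.prod_univ_succ]
    have hk : ∀ (b : A) (y : Fin (N + 1) → A),
        ∏ i : Fin (N + 1), k ((Fin.cons b y : Fin (N + 2) → A) i.castSucc)
            ((Fin.cons b y : Fin (N + 2) → A) i.succ) =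
          k b (y 0) * ∏ j : Fin N, k (y j.castSucc) (y j.succ) := by
      intro b y
      simp [Fin.prod_univ_succ]
    rw [← (Fin.consEquiv fun _ => A).tsum_eq, ENNReal.tsum_prod']
    simp only [Fin.consEquiv_apply, hS, hk, Fin.cons_zero]
    rw [tsum_eq_single a fun b hb => by simp [hb], pathMass]
    simp only [← ih, ← ENNReal.tsum_mul_left]
    conv_rhs => rw [ENNReal.tsum_comm]
    refine tsum_congr fun y => ?_
    rw [tsum_eq_single (y 0) fun c hc => by simp [Ne.symm hc]]
    simp only [if_true]
    ring

lemma indicator_forall_mem {ι : Type*} [Fintype ι] (S : ι → Set A) (g : (ι → A) → ℝ≥0∞)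
    (x : ι → A) :
    {x | ∀ i, x i ∈ S i}.indicator g x = (∏ i, (S i).indicator 1 (x i)) * g x := by
  by_cases hx : ∀ i, x i ∈ S i
  · simp [hx]
  · obtain ⟨i, hi⟩ := not_forall.1 hx
    rw [Set.indicator_of_notMem (show x ∉ {x | ∀ i, x i ∈ S i} from hx),
      Finset.prod_eq_zero (Finset.mem_univ i) (by simp [hi]), zero_mul]

section Measurable

variable [MeasurableSpace A] [DiscreteMeasurableSpace A]

lemma measurableSet_forall_mem (S : ℕ → Set A) : MeasurableSet {ω : ℕ → A | ∀ i, ω i ∈ S i} := by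
  simp only [Set.ofPred_forall]
  exact MeasurableSet.iInter fun i => measurable_pi_apply i MeasurableSet.of_discrete

end Measurable

def IsMarkovLaw [MeasurableSpace A] (k : A → A → ℝ≥0∞) (a : A) (μ : Measure (ℕ → A)) : Prop :=
  ∀ (N : ℕ) (x : Fin (N + 1) → A), μ {ω | ∀ i : Fin (N + 1), ω i = x i} =
    (if x 0 = a then 1 else 0) * ∏ i : Fin N, k (x i.castSucc) (x i.succ)

namespace IsMarkovLaw

variable [MeasurableSpace A] [DiscreteMeasurableSpace A] [Countable A] {k : A → A → ℝ≥0∞}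
  {a : A} {μ : Measure (ℕ → A)}

lemma measure_forall_le_mem (hμ : IsMarkovLaw k a μ) (N : ℕ) (S : ℕ → Set A) :
    μ {ω | ∀ i ≤ N, ω i ∈ S i} = pathMass k N S a := by
  let restrict : (ℕ → A) → Fin (N + 1) → A := fun ω i => ω i
  have hE : {ω | ∀ i ≤ N, ω i ∈ S i} =
      restrict ⁻¹' {x : Fin (N + 1) → A | ∀ i : Fin (N + 1), x i ∈ S i} := by
    ext ω
    simp only [Set.mem_ofPred_eq, Set.mem_preimage, restrict]
    exact ⟨fun h i => h i (Nat.lt_succ_iff.1 i.2), fun h i hi => h ⟨i, Nat.lt_succ_iff.2 hi⟩⟩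
  have hfiber : ∀ x, restrict ⁻¹' {x} = {ω | ∀ i : Fin (N + 1), ω i = x i} := fun x => by
    ext ω; simp [restrict, funext_iff]
  rw [hE, ← tsum_measure_preimage_singleton (Set.to_countable _)
    fun x _ => (measurable_pi_lambda _ fun i => measurable_pi_apply _) (measurableSet_singleton x),
    tsum_subtype _ fun x => μ (restrict ⁻¹' {x}), ← tsum_path_eq_pathMass]
  refine tsum_congr fun x => ?_
  rw [indicator_forall_mem, hfiber, hμ]

lemma tendsto_pathMass [IsFiniteMeasure μ] (hμ : IsMarkovLaw k a μ) (S : ℕ → Set A) :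
    Tendsto (fun N => pathMass k N S a) atTop (𝓝 (μ {ω | ∀ i, ω i ∈ S i})) := by
  have h := tendsto_measure_iInter_le (μ := μ) (f := fun i => {ω : ℕ → A | ω i ∈ S i})
    (fun i => (measurable_pi_apply i (MeasurableSet.of_discrete)).nullMeasurableSet)
    ⟨0, measure_ne_top _ _⟩
  simp only [← Set.ofPred_forall, hμ.measure_forall_le_mem] at h
  exact h

lemma measure_delayed_initThen [IsFiniteMeasure μ] {c : A} {ν : Measure (ℕ → A)}
    [IsFiniteMeasure ν] (hμ : IsMarkovLaw k a μ) (hν : IsMarkovLaw k c ν) (n : ℕ) (D : Set A) :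
    μ {ω | ∀ i, ω i ∈ delayed n (initThen {c} D) i} =
      kernelPow k n a c * ν {ω | ∀ i, ω i ∈ initThen Set.univ D i} := by
  have hsplit : ∀ m, pathMass k (n + m) (delayed n (initThen {c} D)) a =
      kernelPow k n a c * pathMass k m (initThen Set.univ D) c := fun m => by
    rw [pathMass_add_delayed, tsum_eq_single c fun b hb => by
      rw [pathMass_eq_zero_of_notMem k m (by simpa [initThen] using hb), mul_zero],
      pathMass_congr_start (T := initThen Set.univ D) k m (by simp [initThen])
        (by simp [initThen]) fun i => by simp [initThen]]
  -- for `m = 0`, `hsplit` identifies `kernelPow k n a c` with a `μ`-measure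
  have hfin : kernelPow k n a c ≠ ⊤ := by
    have h0 := hsplit 0
    rw [add_zero, ← hμ.measure_forall_le_mem] at h0
    simp only [pathMass, initThen, if_true, Set.indicator_univ, Pi.one_apply, mul_one] at h0
    exact h0 ▸ measure_ne_top μ _
  refine tendsto_nhds_unique ((tendsto_add_atTop_iff_nat n).2 (hμ.tendsto_pathMass _)) ?_
  simp only [add_comm _ n, hsplit]
  exact ENNReal.Tendsto.const_mul (hν.tendsto_pathMass _) (Or.inr hfin)

end IsMarkovLaw

end MarkovChain

section Collisions

lemma pn_eq_kernelPow (G : SimpleGraph V) [G.LocallyFinite] (n : ℕ) :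
    pn G n = kernelPow (step G) n := by
  induction n with
  | zero => rfl
  | succ n ih => funext u v; simp only [pn, kernelPow, ih]

lemma IsPairWalkMeasure.isMarkovLaw [MeasurableSpace V] {p : V → V → ℝ≥0∞} {a b : V}
    {μ : Measure (ℕ → V × V)} (h : IsPairWalkMeasure p a b μ) :
    IsMarkovLaw (fun x y : V × V => p x.1 y.1 * p x.2 y.2) (a, b) μ := by
  intro N x
  let x' : ℕ → V × V := fun i => if hi : i < N + 1 then x ⟨i, hi⟩ else x 0
  have hset : {ω : ℕ → V × V | ∀ i : Fin (N + 1), ω i = x i} = {ω | ∀ i ≤ N, ω i = x' i} := by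
    ext ω
    simp only [Set.mem_ofPred_eq, x']
    exact ⟨fun h i hi => by simpa [Nat.lt_succ_iff.2 hi] using h ⟨i, Nat.lt_succ_iff.2 hi⟩,
      fun h i => by simpa [i.2] using h i (Nat.lt_succ_iff.1 i.2)⟩
  rw [hset, h.2 N x', Finset.prod_range]
  simp [x']
  rfl

lemma noCollision_eq :
    (noCollision : Set (ℕ → V × V)) = {ω | ∀ i, ω i ∈ initThen Set.univ (Set.diagonal V)ᶜ i} := by
  ext ω
  refine ⟨fun h i => ?_, fun h i hi => ?_⟩
  · rcases i with _ | i
    · simp [initThen]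
    · simpa [initThen] using h (i + 1) (Nat.succ_pos i)
  · simpa [initThen, Nat.one_le_iff_ne_zero.1 hi] using h i

lemma lastCollisionAt_eq_iUnion (v : V) :
    lastCollisionAt v =
      ⋃ n, {ω | ∀ i, ω i ∈ delayed n (initThen {(v, v)} (Set.diagonal V)ᶜ) i} := by
  ext ω
  simp [lastCollisionAt, forall_mem_delayed_initThen_iff]

lemma pairwise_disjoint_delayed_initThen (v : V) :
    Pairwise (Function.onFun Disjoint fun n =>
      {ω : ℕ → V × V | ∀ i, ω i ∈ delayed n (initThen {(v, v)} (Set.diagonal V)ᶜ) i}) := by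
  intro m n hmn
  refine Set.disjoint_left.2 fun ω hm hn => ?_
  simp only [Set.mem_ofPred_eq, forall_mem_delayed_initThen_iff] at hm hn
  rcases lt_or_gt_of_ne hmn with h | h
  · exact hm.2 n h (by simp [hn.1])
  · exact hn.2 m h (by simp [hm.1])

end Collisions

theorem last_collision_decomposition_general
    [Countable V] [MeasurableSpace V] [DiscreteMeasurableSpace V]
    (G : SimpleGraph V) [G.LocallyFinite]
    (μ : V → Measure (ℕ → V × V))
    (hμ : ∀ w : V, IsPairWalkMeasure (step G) w w (μ w))
    (u v : V) :
    μ u (lastCollisionAt v) = ∑' n : ℕ, (pn G n u v) ^ 2 * μ v noCollision := by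
  have := (hμ u).1
  have := (hμ v).1
  rw [lastCollisionAt_eq_iUnion, measure_iUnion (pairwise_disjoint_delayed_initThen v)
    fun n => measurableSet_forall_mem _]
  refine tsum_congr fun n => ?_
  rw [(hμ u).isMarkovLaw.measure_delayed_initThen (hμ v).isMarkovLaw, kernelPow_prod,
    ← pn_eq_kernelPow, noCollision_eq, sq]

/-- `q_last(u, v) = Σ_{n ≥ 0} p_n(u, v)^2 · q_0(v)`. -/
theorem last_collision_decomposition
    [Countable V] [MeasurableSpace V] [DiscreteMeasurableSpace V]
    (G : SimpleGraph V) [G.LocallyFinite]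
    (hconn : G.Connected) (hdeg : ∀ v : V, 0 < G.degree v)
    (μ : V → Measure (ℕ → V × V))
    (hμ : ∀ w : V, IsPairWalkMeasure (step G) w w (μ w))
    (u v : V) :
    μ u (lastCollisionAt v) = ∑' n : ℕ, (pn G n u v) ^ 2 * μ v noCollision :=
  last_collision_decomposition_general G μ hμ u v

end CollisionsStmt
end

section
/- For every vertex u of G, the probability that two independent simple random walks started at u collide at only finitely many times satisfies q_fin(u) = Σ_v Σ_{n≥0} p_n(u, v)^2 · q_0(v), where the sum is over all vertices v of G. -/
open MeasureTheory
open scoped ENNReal Classical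

namespace CollisionsStmt

variable {V : Type*}

/-! Split the event of finitely many collisions according to the time `n` and the vertex `v` of
the last collision; it exists because time `0` is a collision almost surely. By the Markov
property at time `n`, "at `(v, v)` at time `n`, no collision afterwards" has probability
`p_n(u, v)^2 · q_0(v)`. The Markov property holds because both sides, as measures in the future
event, agree on prefix cylinders (a Chapman–Kolmogorov computation), and these form a π-system
generating the product σ-algebra. -/

open Function

section PathSpace

variable {α : Type*}

def prefixCylinder (N : ℕ) (x : ℕ → α) : Set (ℕ → α) := {ω | ∀ i ≤ N, ω i = x i}

def prefixCylinders : Set (Set (ℕ → α)) := {s | ∃ N x, s = prefixCylinder N x}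

def shift (n : ℕ) (ω : ℕ → α) : ℕ → α := fun i => ω (n + i)

def pathCons (z : α) (x : ℕ → α) : ℕ → α
  | 0 => z
  | i + 1 => x i

theorem shift_zero : shift (α := α) 0 = id :=
  funext fun ω => funext fun i => congrArg ω (zero_add i)

theorem isPiSystem_prefixCylinders : IsPiSystem (prefixCylinders (α := α)) := by
  rintro _ ⟨N, x, rfl⟩ _ ⟨M, y, rfl⟩ ⟨ω, hωx, hωy⟩
  refine ⟨max N M, ω, Set.ext fun ω' => ⟨fun ⟨hx, hy⟩ i hi => ?_, fun h => ⟨?_, ?_⟩⟩⟩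
  · rcases le_max_iff.1 hi with hi | hi
    · rw [hx i hi, hωx i hi]
    · rw [hy i hi, hωy i hi]
  · exact fun i hi => (h i (le_max_of_le_left hi)).trans (hωx i hi)
  · exact fun i hi => (h i (le_max_of_le_right hi)).trans (hωy i hi)

theorem preimage_eval_singleton_eq_iUnion (i : ℕ) (z : α) :
    (fun ω : ℕ → α => ω i) ⁻¹' {z} =
      ⋃ (y : Fin (i + 1) → α) (_ : y (Fin.last i) = z),
        prefixCylinder i (fun j => y ⟨min j i, by omega⟩) := by
  ext ω
  simp only [Set.mem_preimage, Set.mem_singleton_iff, Set.mem_iUnion, prefixCylinder,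
    Set.mem_ofPred_eq, exists_prop]
  constructor
  · rintro rfl
    exact ⟨fun j => ω j, rfl, fun j hj => by simp [min_eq_left hj]⟩
  · rintro ⟨y, rfl, hω⟩
    exact (hω i le_rfl).trans (congrArg y (Fin.ext (min_self i)))

theorem shift_succ_preimage_prefixCylinder (n N : ℕ) (x : ℕ → α) :
    shift (n + 1) ⁻¹' prefixCylinder N x =
      ⋃ z, shift n ⁻¹' prefixCylinder (N + 1) (pathCons z x) := by
  ext ω
  simp only [Set.mem_preimage, Set.mem_iUnion, prefixCylinder, Set.mem_ofPred_eq, shift]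
  constructor
  · refine fun h => ⟨ω n, fun i hi => ?_⟩
    cases i with
    | zero => rfl
    | succ i => exact (congrArg ω (by omega)).trans (h i (by omega))
  · rintro ⟨z, h⟩ i hi
    exact (congrArg ω (by omega)).trans (h (i + 1) (by omega))

theorem pairwise_disjoint_shift_preimage_prefixCylinder_pathCons (n N : ℕ) (x : ℕ → α) :
    Pairwise (Disjoint on fun z => shift n ⁻¹' prefixCylinder N (pathCons z x)) :=
  fun _ _ hzz' => Set.disjoint_left.2 fun _ hz hz' =>
    hzz' ((hz 0 (Nat.zero_le N)).symm.trans (hz' 0 (Nat.zero_le N)))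

variable [MeasurableSpace α]

theorem measurable_shift (n : ℕ) : Measurable (shift (α := α) n) :=
  measurable_pi_lambda _ fun i => measurable_pi_apply (n + i)

theorem measurableSet_prefixCylinder [MeasurableSingletonClass α] (N : ℕ) (x : ℕ → α) :
    MeasurableSet (prefixCylinder N x) := by
  simp only [prefixCylinder, Set.ofPred_forall]
  exact .iInter fun i => .iInter fun _ =>
    (measurableSet_singleton (x i)).preimage (measurable_pi_apply i)

theorem generateFrom_prefixCylinders [Countable α] [MeasurableSingletonClass α] :
    MeasurableSpace.generateFrom prefixCylinders =
      MeasurableSpace.pi (X := fun _ : ℕ => α) := by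
  refine le_antisymm (MeasurableSpace.generateFrom_le ?_) (iSup_le fun i => ?_)
  · rintro _ ⟨N, x, rfl⟩
    exact measurableSet_prefixCylinder N x
  · refine Measurable.comap_le
      (@measurable_to_countable' α (ℕ → α) _ _ (.generateFrom prefixCylinders) _ fun z => ?_)
    rw [preimage_eval_singleton_eq_iUnion]
    exact .iUnion fun y => .iUnion fun _ =>
      MeasurableSpace.measurableSet_generateFrom ⟨i, _, rfl⟩

theorem measure_ext_of_prefixCylinder [Countable α] [MeasurableSingletonClass α]
    {μ ν : Measure (ℕ → α)} [IsFiniteMeasure μ]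
    (h : ∀ N x, μ (prefixCylinder N x) = ν (prefixCylinder N x)) : μ = ν := by
  refine ext_of_generate_finite _ generateFrom_prefixCylinders.symm isPiSystem_prefixCylinders
    (by rintro _ ⟨N, x, rfl⟩; exact h N x) ?_
  have huniv : Set.univ = ⋃ z : α, prefixCylinder 0 (fun _ => z) := by
    ext ω
    simp [prefixCylinder]
  have hdisj : Pairwise (Disjoint on fun z : α => prefixCylinder 0 (fun _ => z)) :=
    fun _ _ hzz' => Set.disjoint_left.2 fun _ hz hz' =>
      hzz' ((hz 0 le_rfl).symm.trans (hz' 0 le_rfl))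
  simp only [huniv, measure_iUnion hdisj fun z => measurableSet_prefixCylinder 0 _, h]

end PathSpace

section PairWalk

variable (G : SimpleGraph V) [G.LocallyFinite]

theorem pn_succ' (n : ℕ) (u v : V) : pn G (n + 1) u v = ∑' w, pn G n u w * step G w v := by
  induction n generalizing u with
  | zero => simp [pn]
  | succ n ih =>
    calc pn G (n + 2) u v = ∑' w, step G u w * ∑' w', pn G n w w' * step G w' v := by
          rw [pn]
          simp only [ih]
      _ = ∑' w', (∑' w, step G u w * pn G n w w') * step G w' v := by
          simp only [← ENNReal.tsum_mul_left, ← ENNReal.tsum_mul_right, mul_assoc]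
          exact ENNReal.tsum_comm
      _ = ∑' w', pn G (n + 1) u w' * step G w' v := rfl

theorem pn_mul_pn_succ (n : ℕ) (a b c d : V) :
    pn G (n + 1) a c * pn G (n + 1) b d =
      ∑' z : V × V, pn G n a z.1 * pn G n b z.2 * (step G z.1 c * step G z.2 d) := by
  rw [pn_succ', pn_succ', ENNReal.tsum_prod', ← ENNReal.tsum_mul_right]
  refine tsum_congr fun w => ?_
  rw [← ENNReal.tsum_mul_left]
  exact tsum_congr fun w' => by ring

end PairWalk

section PairWalkMeasure

variable [MeasurableSpace V] {G : SimpleGraph V} [G.LocallyFinite] {a b : V}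
  {μ : Measure (ℕ → V × V)}

theorem IsPairWalkMeasure.measure_prefixCylinder (hμ : IsPairWalkMeasure (step G) a b μ)
    {N : ℕ} {x : ℕ → V × V} :
    μ (prefixCylinder N x) =
      (if x 0 = (a, b) then 1 else 0) *
        ∏ i ∈ Finset.range N, (step G (x i).1 (x (i + 1)).1 * step G (x i).2 (x (i + 1)).2) :=
  hμ.2 N x

variable [MeasurableSingletonClass V]

theorem IsPairWalkMeasure.ae_start (hμ : IsPairWalkMeasure (step G) a b μ) :
    ∀ᵐ ω ∂μ, ω 0 = (a, b) := by
  have : IsProbabilityMeasure μ := hμ.1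
  have h1 : μ (prefixCylinder 0 fun _ => (a, b)) = 1 := by simp [hμ.measure_prefixCylinder]
  filter_upwards [(mem_ae_iff_prob_eq_one (measurableSet_prefixCylinder 0 _)).2 h1] with ω hω
  exact hω 0 le_rfl

variable [Countable V]

theorem IsPairWalkMeasure.measure_shift_preimage_prefixCylinder
    (hμ : IsPairWalkMeasure (step G) a b μ) (n N : ℕ) (x : ℕ → V × V) :
    μ (shift n ⁻¹' prefixCylinder N x) =
      pn G n a (x 0).1 * pn G n b (x 0).2 *
        ∏ i ∈ Finset.range N, (step G (x i).1 (x (i + 1)).1 * step G (x i).2 (x (i + 1)).2) := by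
  induction n generalizing N x with
  | zero =>
    rw [shift_zero, Set.preimage_id]
    refine hμ.measure_prefixCylinder.trans (congrArg (· * _) ?_)
    simp only [pn, ite_zero_mul_ite_zero, mul_one, Prod.ext_iff, eq_comm]
  | succ n ih =>
    rw [shift_succ_preimage_prefixCylinder,
      measure_iUnion (pairwise_disjoint_shift_preimage_prefixCylinder_pathCons n (N + 1) x)
        fun z => measurable_shift n (measurableSet_prefixCylinder _ _),
      pn_mul_pn_succ, ← ENNReal.tsum_mul_right]
    refine tsum_congr fun z => ?_
    rw [ih, Finset.prod_range_succ']
    simp only [pathCons]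
    ring

theorem IsPairWalkMeasure.measure_inter_shift_preimage (hμ : IsPairWalkMeasure (step G) a b μ)
    {c d : V} {ν : Measure (ℕ → V × V)} (hν : IsPairWalkMeasure (step G) c d ν)
    (n : ℕ) {A : Set (ℕ → V × V)} (hA : MeasurableSet A) :
    μ ({ω | ω n = (c, d)} ∩ shift n ⁻¹' A) = pn G n a c * pn G n b d * ν A := by
  have : IsProbabilityMeasure μ := hμ.1
  have hmap :
      (μ.restrict {ω | ω n = (c, d)}).map (shift n) = (pn G n a c * pn G n b d) • ν := by
    refine measure_ext_of_prefixCylinder fun N x => ?_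
    have hcyl := measurableSet_prefixCylinder N x
    rw [Measure.map_apply (measurable_shift n) hcyl,
      Measure.restrict_apply (measurable_shift n hcyl), Measure.smul_apply, smul_eq_mul,
      hν.measure_prefixCylinder]
    by_cases hx : x 0 = (c, d)
    · have hsub : shift n ⁻¹' prefixCylinder N x ⊆ {ω | ω n = (c, d)} :=
        fun ω hω => (hω 0 (Nat.zero_le N)).trans hx
      rw [Set.inter_eq_left.2 hsub, hμ.measure_shift_preimage_prefixCylinder, hx, if_pos rfl,
        one_mul]
    · have hdisj : shift n ⁻¹' prefixCylinder N x ∩ {ω | ω n = (c, d)} = ∅ :=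
        Set.eq_empty_of_forall_notMem fun ω ⟨hω, hωn⟩ =>
          hx ((hω 0 (Nat.zero_le N)).symm.trans hωn)
      rw [hdisj, if_neg hx, measure_empty, zero_mul, mul_zero]
  have hA' := congrArg (fun m : Measure (ℕ → V × V) => m A) hmap
  simp only [Measure.map_apply (measurable_shift n) hA,
    Measure.restrict_apply (measurable_shift n hA), Measure.smul_apply, smul_eq_mul] at hA'
  rwa [Set.inter_comm] at hA'

end PairWalkMeasure

section Collisions

def lastCollisionAtTime (n : ℕ) (v : V) : Set (ℕ → V × V) :=
  {ω | ω n = (v, v)} ∩ shift n ⁻¹' noCollision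

theorem mem_shift_preimage_noCollision {n : ℕ} {ω : ℕ → V × V} :
    ω ∈ shift n ⁻¹' noCollision ↔ ∀ m > n, (ω m).1 ≠ (ω m).2 := by
  refine ⟨fun h m hm => ?_, fun h k hk => h (n + k) (by omega)⟩
  simpa [shift, Nat.add_sub_cancel' hm.le] using h (m - n) (by omega)

theorem lastCollisionAt_eq_iUnion_s1 (v : V) :
    lastCollisionAt v = ⋃ n, lastCollisionAtTime n v := by
  ext ω
  simp only [Set.mem_iUnion, lastCollisionAtTime, Set.mem_inter_iff,
    mem_shift_preimage_noCollision]
  rfl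

theorem eq_of_mem_lastCollisionAtTime {n n' : ℕ} {v v' : V} {ω : ℕ → V × V}
    (h : ω ∈ lastCollisionAtTime n v) (h' : ω ∈ lastCollisionAtTime n' v') :
    n = n' ∧ v = v' := by
  rw [lastCollisionAtTime, Set.mem_inter_iff, mem_shift_preimage_noCollision] at h h'
  obtain ⟨hn, hafter⟩ := h
  obtain ⟨hn', hafter'⟩ := h'
  have hnn' : n = n' := by
    by_contra hne
    rcases Nat.lt_or_gt_of_ne hne with hlt | hlt
    · exact hafter n' hlt (by rw [hn'])
    · exact hafter' n hlt (by rw [hn])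
  subst hnn'
  exact ⟨rfl, (Prod.mk.inj (hn.symm.trans hn')).1⟩

theorem pairwise_disjoint_lastCollisionAtTime (v : V) :
    Pairwise (Disjoint on fun n => lastCollisionAtTime n v) :=
  fun _ _ hnn' => Set.disjoint_left.2 fun _ h h' => hnn' (eq_of_mem_lastCollisionAtTime h h').1

theorem pairwise_disjoint_lastCollisionAt : Pairwise (Disjoint on lastCollisionAt (V := V)) := by
  refine fun _ _ hvv' => Set.disjoint_left.2 fun _ h h' => ?_
  rw [lastCollisionAt_eq_iUnion_s1, Set.mem_iUnion] at h h'
  obtain ⟨n, h⟩ := h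
  obtain ⟨n', h'⟩ := h'
  exact hvv' (eq_of_mem_lastCollisionAtTime h h').2

theorem mem_finCollisions_iff {ω : ℕ → V × V} (h0 : (ω 0).1 = (ω 0).2) :
    ω ∈ finCollisions ↔ ∃ v, ω ∈ lastCollisionAt v := by
  constructor
  · intro hfin
    have hmem : sSup {n | (ω n).1 = (ω n).2} ∈ {n | (ω n).1 = (ω n).2} :=
      Nat.sSup_mem ⟨0, h0⟩ hfin.bddAbove
    refine ⟨(ω _).1, _, Prod.ext rfl hmem.symm, fun m hm hcoll => ?_⟩
    exact absurd (le_csSup hfin.bddAbove hcoll) (not_le.2 hm)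
  · rintro ⟨v, n, -, hafter⟩
    refine (Set.finite_Iic n).subset fun m hm => ?_
    by_contra hgt
    exact hafter m (not_le.1 hgt) hm

variable [MeasurableSpace V] [Countable V] [MeasurableSingletonClass V]

theorem measurableSet_noCollision : MeasurableSet (noCollision (V := V)) := by
  simp only [noCollision, Set.ofPred_forall]
  exact .iInter fun n => .iInter fun _ =>
    (Set.to_countable {p : V × V | p.1 ≠ p.2}).measurableSet.preimage (measurable_pi_apply n)

theorem measurableSet_lastCollisionAtTime (n : ℕ) (v : V) :
    MeasurableSet (lastCollisionAtTime n v) :=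
  ((measurableSet_singleton (v, v)).preimage (measurable_pi_apply n)).inter
    (measurable_shift n measurableSet_noCollision)

end Collisions

theorem finitely_many_collisions_decomposition_general
    [Countable V] [MeasurableSpace V] [DiscreteMeasurableSpace V]
    (G : SimpleGraph V) [G.LocallyFinite]
    (μ : V → Measure (ℕ → V × V))
    (hμ : ∀ w : V, IsPairWalkMeasure (step G) w w (μ w))
    (u : V) :
    μ u finCollisions = ∑' v : V, ∑' n : ℕ, (pn G n u v) ^ 2 * μ v noCollision := by
  have hfin : finCollisions =ᵐ[μ u] ⋃ v, lastCollisionAt v :=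
    (hμ u).ae_start.mono fun ω h0 =>
      propext ((mem_finCollisions_iff (by rw [h0])).trans Set.mem_iUnion.symm)
  have hmeas (v : V) : MeasurableSet (lastCollisionAt v) := by
    rw [lastCollisionAt_eq_iUnion_s1]
    exact .iUnion fun n => measurableSet_lastCollisionAtTime n v
  rw [measure_congr hfin, measure_iUnion pairwise_disjoint_lastCollisionAt hmeas]
  refine tsum_congr fun v => ?_
  rw [lastCollisionAt_eq_iUnion_s1, measure_iUnion (pairwise_disjoint_lastCollisionAtTime v)
    fun n => measurableSet_lastCollisionAtTime n v]
  refine tsum_congr fun n => ?_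
  rw [lastCollisionAtTime, (hμ u).measure_inter_shift_preimage (hμ v) n measurableSet_noCollision,
    sq]

/-- `q_fin(u) = Σ_v Σ_{n ≥ 0} p_n(u, v)^2 · q_0(v)`. -/
theorem finitely_many_collisions_decomposition
    [Countable V] [MeasurableSpace V] [DiscreteMeasurableSpace V]
    (G : SimpleGraph V) [G.LocallyFinite]
    (hconn : G.Connected) (hdeg : ∀ v : V, 0 < G.degree v)
    (μ : V → Measure (ℕ → V × V))
    (hμ : ∀ w : V, IsPairWalkMeasure (step G) w w (μ w))
    (u : V) :
    μ u finCollisions = ∑' v : V, ∑' n : ℕ, (pn G n u v) ^ 2 * μ v noCollision :=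
  finitely_many_collisions_decomposition_general G μ hμ u
end CollisionsStmt
end
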